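/- arXiv:1412.4027 — 7 statements merged into one kernel-verified Lean document; each statement's English description precedes it below -/
import Mathlib

section
/- Let 1 → A →ι B →π C → 1 be a short exact sequence of G-groups and let c ∈ C^G. For any b ∈ B with π(b) = c and any s ∈ G, the element b⁻¹ * (s • b) lies in the image of ι, and the function δ_b : G → A defined by ι(δ_b(s)) = b⁻¹ * (s • b) is a 1-cocycle of G in A. Moreover, if b' ∈ B is another element with π(b') = c, then δ_b and δ_{b'} are cohomologous; hence there is a well-defined connecting map δ : C^G → H¹(G,A) sending c to the class of δ_b. -/
/-! The map `s ↦ b⁻¹ * s • b` is a coboundary, hence a cocycle, of `G` in `B`. Since `π b` is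
`G`-fixed it takes values in `π.ker = ι.range`, so it descends to a cocycle of `G` in `A`, and
replacing the lift `b` by `b'` twists it by the element `b⁻¹ * b'`, which also lies in `ι.range`. -/

/-- A 1-cocycle of a group `G` in a (not necessarily abelian) `G`-group `A`. -/
def IsCocycle {G A : Type*} [Group G] [Group A] [MulDistribMulAction G A]
    (a : G → A) : Prop :=
  ∀ s t : G, a (s * t) = a s * s • a t

/-- Two functions `a b : G → A` are cohomologous. -/
def Cohomologous {G A : Type*} [Group G] [Group A] [MulDistribMulAction G A]
    (a b : G → A) : Prop :=
  ∃ c : A, ∀ s : G, b s = c⁻¹ * a s * s • c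

section

variable {G A B C : Type*} [Group G] [Group A] [Group B] [Group C]
  [MulDistribMulAction G A] [MulDistribMulAction G B] [MulDistribMulAction G C]

theorem inv_mul_smul_mem_ker {π : B →* C} (hπ_equiv : ∀ (s : G) (b : B), π (s • b) = s • π b)
    {b : B} {s : G} (hs : s • π b = π b) : b⁻¹ * s • b ∈ π.ker := by
  rw [MonoidHom.mem_ker, map_mul, map_inv, hπ_equiv, hs, inv_mul_cancel]

theorem isCocycle_inv_mul_smul (b : B) : IsCocycle fun s : G => b⁻¹ * s • b := by
  intro s t
  dsimp only
  rw [mul_smul, smul_mul', smul_inv']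
  group

theorem inv_mul_smul_eq_conj (b b' : B) (s : G) :
    b'⁻¹ * s • b' = (b⁻¹ * b')⁻¹ * (b⁻¹ * s • b) * s • (b⁻¹ * b') := by
  rw [smul_mul', smul_inv']
  group

theorem IsCocycle.of_injective_map {ι : A →* B}
    (hι_equiv : ∀ (s : G) (a : A), ι (s • a) = s • ι a) (hι : Function.Injective ι)
    {δ : G → A} {f : G → B} (hf : IsCocycle f)
    (hδ : ∀ s, ι (δ s) = f s) : IsCocycle δ := fun s t =>
  hι <| by rw [map_mul, hι_equiv, hδ, hδ, hδ, hf]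

theorem Cohomologous.of_injective_map {ι : A →* B}
    (hι_equiv : ∀ (s : G) (a : A), ι (s • a) = s • ι a) (hι : Function.Injective ι)
    {δ δ' : G → A} (a : A) (h : ∀ s, ι (δ' s) = (ι a)⁻¹ * ι (δ s) * s • ι a) :
    Cohomologous δ δ' :=
  ⟨a, fun s => hι <| by rw [h, map_mul, map_mul, map_inv, hι_equiv]⟩

end

theorem connecting_cocycle_general (G A B C : Type*) [Group G] [Group A] [Group B] [Group C]
    [MulDistribMulAction G A] [MulDistribMulAction G B] [MulDistribMulAction G C]
    (ι : A →* B) (π : B →* C)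
    (hι_equiv : ∀ (s : G) (a : A), ι (s • a) = s • ι a)
    (hπ_equiv : ∀ (s : G) (b : B), π (s • b) = s • π b)
    (hι : Function.Injective ι)
    (hexact : ι.range = π.ker)
    (c : C) (hc : ∀ s : G, s • c = c)
    (b b' : B) (hb : π b = c) (hb' : π b' = c)
    (δ δ' : G → A)
    (hδ : ∀ s : G, ι (δ s) = b⁻¹ * (s • b))
    (hδ' : ∀ s : G, ι (δ' s) = b'⁻¹ * (s • b')) :
    (∀ s : G, b⁻¹ * (s • b) ∈ ι.range) ∧ IsCocycle δ ∧ Cohomologous δ δ' := by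
  have hquot : b⁻¹ * b' ∈ ι.range := by
    rw [hexact, MonoidHom.mem_ker, map_mul, map_inv, hb, hb', inv_mul_cancel]
  obtain ⟨a, ha⟩ := hquot
  refine ⟨fun s => hexact ▸ inv_mul_smul_mem_ker hπ_equiv (by rw [hb, hc]),
    (isCocycle_inv_mul_smul b).of_injective_map hι_equiv hι hδ,
    Cohomologous.of_injective_map hι_equiv hι a fun s => ?_⟩
  rw [hδ, hδ', ha, inv_mul_smul_eq_conj b b' s]

/-- The connecting map of a short exact sequence `1 → A → B → C → 1` of
`G`-groups: for a `G`-fixed `c : C` and a lift `b` of `c`, the element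
`b⁻¹ * (s • b)` lies in the image of `ι`; the resulting function
`δ_b : G → A` (characterised by `ι (δ_b s) = b⁻¹ * (s • b)`) is a 1-cocycle,
and for two lifts `b`, `b'` of `c` the cocycles `δ_b` and `δ_{b'}` are
cohomologous; hence `δ : C^G → H¹(G,A)` is well defined. -/
theorem connecting_cocycle (G A B C : Type*) [Group G] [Group A] [Group B] [Group C]
    [MulDistribMulAction G A] [MulDistribMulAction G B] [MulDistribMulAction G C]
    (ι : A →* B) (π : B →* C)
    (hι_equiv : ∀ (s : G) (a : A), ι (s • a) = s • ι a)
    (hπ_equiv : ∀ (s : G) (b : B), π (s • b) = s • π b)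
    (hι : Function.Injective ι) (hπ : Function.Surjective π)
    (hexact : ι.range = π.ker)
    (c : C) (hc : ∀ s : G, s • c = c)
    (b b' : B) (hb : π b = c) (hb' : π b' = c)
    (δ δ' : G → A)
    (hδ : ∀ s : G, ι (δ s) = b⁻¹ * (s • b))
    (hδ' : ∀ s : G, ι (δ' s) = b'⁻¹ * (s • b')) :
    (∀ s : G, b⁻¹ * (s • b) ∈ ι.range) ∧ IsCocycle δ ∧ Cohomologous δ δ' :=
  connecting_cocycle_general G A B C ι π hι_equiv hπ_equiv hι hexact c hc b b' hb hb' δ δ' hδ hδ'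
end

section
/- Let 1 → A →ι B →π C → 1 be a short exact sequence of G-groups. The sequence of pointed sets is exact at C^G = H⁰(G,C): an element c ∈ C^G lies in the image of π restricted to B^G if and only if the connecting class δ(c) ∈ H¹(G,A) is the trivial class (i.e. any cocycle s ↦ ι⁻¹(b⁻¹ * (s • b)), with π(b) = c, is a coboundary). -/
theorem exists_connecting_cocycle {G A B C : Type*} [Group G] [Group A] [Group B] [Group C]
    [MulDistribMulAction G B] [MulDistribMulAction G C] {ι : A →* B} {π : B →* C}
    (hexact : ι.range = π.ker) (hπ_equiv : ∀ (s : G) (b : B), π (s • b) = s • π b) {b : B}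
    (hfix : ∀ s : G, s • π b = π b) : ∃ δ : G → A, ∀ s, ι (δ s) = b⁻¹ * s • b := by
  have hrange (s : G) : b⁻¹ * s • b ∈ ι.range :=
    hexact ▸ π.mem_ker.2 (by rw [map_mul, map_inv, hπ_equiv, hfix, inv_mul_cancel])
  choose δ hδ using hrange
  exact ⟨δ, hδ⟩

section ConnectingCocycle

variable {G A B : Type*} [Group G] [Group A] [Group B]
  [MulDistribMulAction G A] [MulDistribMulAction G B] {ι : A →* B}

theorem cohomologous_one_of_smul_eq (hι_equiv : ∀ (s : G) (a : A), ι (s • a) = s • ι a)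
    (hι : Function.Injective ι) {b₀ b : B} (hb₀ : ∀ s : G, s • b₀ = b₀) {a : A}
    (ha : ι a = b₀⁻¹ * b) {δ : G → A} (hδ : ∀ s, ι (δ s) = b⁻¹ * s • b) :
    Cohomologous (fun _ => 1) δ := by
  refine ⟨a, fun s => hι ?_⟩
  simp only [map_mul, map_inv, mul_one, hι_equiv, ha, hδ, smul_mul', smul_inv', hb₀]
  group

theorem smul_mul_inv_eq_of_cohomologous_one (hι_equiv : ∀ (s : G) (a : A), ι (s • a) = s • ι a)
    {b : B} {δ : G → A} (hδ : ∀ s, ι (δ s) = b⁻¹ * s • b) {a : A}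
    (ha : ∀ s, δ s = a⁻¹ * 1 * s • a) (s : G) : s • (b * (ι a)⁻¹) = b * (ι a)⁻¹ := by
  have hsb : s • b = b * ι (δ s) := by rw [hδ, mul_inv_cancel_left]
  rw [smul_mul', hsb, smul_inv', ← hι_equiv, ha, mul_one, map_mul, map_inv]
  group

end ConnectingCocycle

/-- Exactness at `C^G = H⁰(G,C)` for a short exact sequence
`1 → A → B → C → 1` of `G`-groups: a `G`-fixed `c : C` is the image of a
`G`-fixed element of `B` iff the connecting class `δ(c) ∈ H¹(G,A)` is
trivial, i.e. every cocycle `s ↦ ι⁻¹ (b⁻¹ * (s • b))` with `π b = c` is a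
coboundary. -/
theorem exact_at_H0C (G A B C : Type*) [Group G] [Group A] [Group B] [Group C]
    [MulDistribMulAction G A] [MulDistribMulAction G B] [MulDistribMulAction G C]
    (ι : A →* B) (π : B →* C)
    (hι_equiv : ∀ (s : G) (a : A), ι (s • a) = s • ι a)
    (hπ_equiv : ∀ (s : G) (b : B), π (s • b) = s • π b)
    (hι : Function.Injective ι) (hπ : Function.Surjective π)
    (hexact : ι.range = π.ker)
    (c : C) (hc : ∀ s : G, s • c = c) :
    (∃ b : B, (∀ s : G, s • b = b) ∧ π b = c) ↔
      (∀ (b : B) (δ : G → A), π b = c → (∀ s : G, ι (δ s) = b⁻¹ * (s • b)) →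
        Cohomologous (fun _ => 1) δ) := by
  constructor
  · rintro ⟨b₀, hb₀, rfl⟩ b δ hb hδ
    obtain ⟨a, ha⟩ : b₀⁻¹ * b ∈ ι.range := hexact ▸ π.mem_ker.2 (by simp [hb])
    exact cohomologous_one_of_smul_eq hι_equiv hι hb₀ ha hδ
  · intro h
    obtain ⟨b, rfl⟩ := hπ c
    obtain ⟨δ, hδ⟩ := exists_connecting_cocycle hexact hπ_equiv hc
    obtain ⟨a, ha⟩ := h b δ rfl hδ
    have hιa : ι a ∈ π.ker := hexact ▸ ⟨a, rfl⟩
    exact ⟨b * (ι a)⁻¹, smul_mul_inv_eq_of_cohomologous_one hι_equiv hδ ha,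
      by rw [map_mul, map_inv, π.mem_ker.1 hιa, inv_one, mul_one]⟩
end

section
/- Let 1 → A →ι B →π C → 1 be a short exact sequence of G-groups. The induced sequence of pointed sets is exact at H¹(G,A): a 1-cocycle a : G → A has ι ∘ a a coboundary in B if and only if the class of a equals the connecting class δ(c) for some c ∈ C^G. -/
namespace Cohomologous

variable {G A B : Type*} [Group G] [Group A] [Group B]
  [MulDistribMulAction G A] [MulDistribMulAction G B]

theorem refl (a : G → A) : Cohomologous a a :=
  ⟨1, fun s => by simp⟩

theorem symm {a b : G → A} (h : Cohomologous a b) : Cohomologous b a := by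
  obtain ⟨c, hc⟩ := h
  refine ⟨c⁻¹, fun s => ?_⟩
  rw [hc, smul_inv']
  group

theorem trans {a b d : G → A} (hab : Cohomologous a b) (hbd : Cohomologous b d) :
    Cohomologous a d := by
  obtain ⟨c, hc⟩ := hab
  obtain ⟨e, he⟩ := hbd
  refine ⟨c * e, fun s => ?_⟩
  rw [he, hc, smul_mul']
  group

theorem map {a b : G → A} (h : Cohomologous a b) (f : A →* B)
    (hf : ∀ (s : G) (x : A), f (s • x) = s • f x) :
    Cohomologous (fun s => f (a s)) (fun s => f (b s)) := by
  obtain ⟨c, hc⟩ := h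
  exact ⟨f c, fun s => by simp only [hc, map_mul, map_inv, hf]⟩

theorem one_left_iff {b : G → A} :
    Cohomologous (fun _ => (1 : A)) b ↔ ∃ c : A, ∀ s : G, b s = c⁻¹ * s • c := by
  simp only [Cohomologous, mul_one]

end Cohomologous

theorem MonoidHom.smul_map_eq_of_inv_mul_smul_mem_ker {G B C : Type*} [Group G] [Group B]
    [Group C] [MulDistribMulAction G B] [MulDistribMulAction G C] (π : B →* C)
    (hπ_equiv : ∀ (s : G) (b : B), π (s • b) = s • π b) {s : G} {b : B}
    (h : b⁻¹ * s • b ∈ π.ker) : s • π b = π b := by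
  rw [mem_ker, map_mul, map_inv, inv_mul_eq_one, hπ_equiv] at h
  exact h.symm

theorem exact_at_H1A_general (G A B C : Type*) [Group G] [Group A] [Group B] [Group C]
    [MulDistribMulAction G A] [MulDistribMulAction G B] [MulDistribMulAction G C]
    (ι : A →* B) (π : B →* C)
    (hι_equiv : ∀ (s : G) (a : A), ι (s • a) = s • ι a)
    (hπ_equiv : ∀ (s : G) (b : B), π (s • b) = s • π b)
    (hexact : ι.range = π.ker)
    (a : G → A) :
    Cohomologous (fun _ => (1 : B)) (fun s => ι (a s)) ↔
      ∃ c : C, (∀ s : G, s • c = c) ∧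
        ∃ (b : B) (δ : G → A), π b = c ∧
          (∀ s : G, ι (δ s) = b⁻¹ * (s • b)) ∧ Cohomologous a δ := by
  constructor
  · intro h
    obtain ⟨b, hb⟩ := Cohomologous.one_left_iff.mp h
    refine ⟨π b, fun s => ?_, b, a, rfl, hb, .refl a⟩
    refine π.smul_map_eq_of_inv_mul_smul_mem_ker hπ_equiv ?_
    rw [← hb, ← hexact]
    exact ⟨a s, rfl⟩
  · rintro ⟨-, -, b, δ, -, hδ, haδ⟩
    exact (Cohomologous.one_left_iff.mpr ⟨b, hδ⟩).trans (haδ.map ι hι_equiv).symm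

/-- Exactness at `H¹(G,A)` for a short exact sequence `1 → A → B → C → 1` of
`G`-groups: for a 1-cocycle `a : G → A`, the cocycle `ι ∘ a` is a coboundary
in `B` iff the class of `a` is the connecting class `δ(c)` of some
`G`-fixed `c : C`, i.e. `a` is cohomologous to a cocycle `δ` with
`ι (δ s) = b⁻¹ * (s • b)` for a lift `b` of `c`. -/
theorem exact_at_H1A (G A B C : Type*) [Group G] [Group A] [Group B] [Group C]
    [MulDistribMulAction G A] [MulDistribMulAction G B] [MulDistribMulAction G C]
    (ι : A →* B) (π : B →* C)
    (hι_equiv : ∀ (s : G) (a : A), ι (s • a) = s • ι a)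
    (hπ_equiv : ∀ (s : G) (b : B), π (s • b) = s • π b)
    (hι : Function.Injective ι) (hπ : Function.Surjective π)
    (hexact : ι.range = π.ker)
    (a : G → A) (ha : IsCocycle a) :
    Cohomologous (fun _ => (1 : B)) (fun s => ι (a s)) ↔
      ∃ c : C, (∀ s : G, s • c = c) ∧
        ∃ (b : B) (δ : G → A), π b = c ∧
          (∀ s : G, ι (δ s) = b⁻¹ * (s • b)) ∧ Cohomologous a δ :=
  exact_at_H1A_general G A B C ι π hι_equiv hπ_equiv hexact a
end

section
/- Let 1 → A →ι B →π C → 1 be a short exact sequence of G-groups. The induced sequence of pointed sets is exact at H¹(G,B): a 1-cocycle b : G → B has π ∘ b a coboundary in C if and only if b is cohomologous to ι ∘ a for some 1-cocycle a : G → A. -/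
/-!
Lift a witness `π ∘ b ~ 1` to `β : B`. Twisting `b` by `β` gives a cocycle with values in
`ker π = range ι`, hence of the form `ι ∘ a`, and `a` is a cocycle because `ι` is injective.
Conversely, applying `π` to `b ~ ι ∘ a` gives `π ∘ b ~ π ∘ ι ∘ a = 1`.
-/

section

variable {G A B : Type*} [Group G] [Group A] [Group B]
  [MulDistribMulAction G A] [MulDistribMulAction G B]

theorem Cohomologous.symm_s7 {a b : G → A} (h : Cohomologous a b) : Cohomologous b a := by
  obtain ⟨c, hc⟩ := h
  exact ⟨c⁻¹, fun s => by rw [hc s, smul_inv']; group⟩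

theorem Cohomologous.map_s7 {a b : G → A} (h : Cohomologous a b) (f : A →* B)
    (hf : ∀ (s : G) (x : A), f (s • x) = s • f x) :
    Cohomologous (fun s => f (a s)) (fun s => f (b s)) := by
  obtain ⟨c, hc⟩ := h
  exact ⟨f c, fun s => by simp only; rw [hc s, map_mul, map_mul, map_inv, hf]⟩

theorem IsCocycle.of_cohomologous {a b : G → A} (ha : IsCocycle a) (h : Cohomologous a b) :
    IsCocycle b := by
  obtain ⟨c, hc⟩ := h
  intro s t
  rw [hc, hc, hc, ha, smul_mul', smul_mul', smul_inv', mul_smul]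
  group

theorem IsCocycle.of_comp_injective {a : G → A} (f : A →* B)
    (hf : ∀ (s : G) (x : A), f (s • x) = s • f x) (hinj : Function.Injective f)
    (h : IsCocycle fun s => f (a s)) : IsCocycle a :=
  fun s t => hinj <| by rw [map_mul, hf]; exact h s t

end

/-- Exactness at `H¹(G,B)` for a short exact sequence `1 → A → B → C → 1` of
`G`-groups: for a 1-cocycle `b : G → B`, the cocycle `π ∘ b` is a coboundary
in `C` iff `b` is cohomologous to `ι ∘ a` for some 1-cocycle `a : G → A`. -/
theorem exact_at_H1B (G A B C : Type*) [Group G] [Group A] [Group B] [Group C]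
    [MulDistribMulAction G A] [MulDistribMulAction G B] [MulDistribMulAction G C]
    (ι : A →* B) (π : B →* C)
    (hι_equiv : ∀ (s : G) (a : A), ι (s • a) = s • ι a)
    (hπ_equiv : ∀ (s : G) (b : B), π (s • b) = s • π b)
    (hι : Function.Injective ι) (hπ : Function.Surjective π)
    (hexact : ι.range = π.ker)
    (b : G → B) (hb : IsCocycle b) :
    Cohomologous (fun _ => (1 : C)) (fun s => π (b s)) ↔
      ∃ a : G → A, IsCocycle a ∧ Cohomologous b (fun s => ι (a s)) := by
  constructor
  · intro h
    obtain ⟨c, hc⟩ := h.symm_s7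
    obtain ⟨β, rfl⟩ := hπ c
    have hker (s : G) : β⁻¹ * b s * s • β ∈ ι.range := by
      rw [hexact, MonoidHom.mem_ker, map_mul, map_mul, map_inv, hπ_equiv, ← hc]
    choose a ha using hker
    have hba : Cohomologous b (fun s => ι (a s)) := ⟨β, ha⟩
    exact ⟨a, (hb.of_cohomologous hba).of_comp_injective ι hι_equiv hι, hba⟩
  · rintro ⟨a, -, hba⟩
    have hιa (s : G) : π (ι (a s)) = 1 := by
      rw [← MonoidHom.mem_ker, ← hexact]
      exact ⟨a s, rfl⟩
    have := hba.map_s7 π hπ_equiv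
    simp only [hιa] at this
    exact this.symm_s7
end

section
/- Let G act on a group A by group automorphisms and let N be a normal subgroup of G, so that G/N acts on the fixed subgroup A^N. Then: (i) if ā : G/N → A^N is a 1-cocycle of G/N in A^N, its pullback a : G → A, a(s) = ā(sN), is a 1-cocycle of G in A (inflation is well defined); (ii) inflation is injective on cohomology classes: if the pullbacks of two 1-cocycles ā, b̄ of G/N in A^N are cohomologous as cocycles of G in A, then ā and b̄ are cohomologous as cocycles of G/N in A^N; (iii) a class in H¹(G,A) restricting to the trivial class in H¹(N,A) lies in the image of inflation. -/
/-- Inflation for a normal subgroup `N ⊴ G` acting on `A`.  A 1-cocycle of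
`G/N` in the fixed subgroup `A^N` is given by a function `ā : G/N → A` whose
values are `N`-fixed and which satisfies the cocycle identity for the induced
`G/N`-action (expressed via lifts, this action being `(sN) • a = s • a`).
Then:
(i) the pullback `s ↦ ā (sN)` is a 1-cocycle of `G` in `A`;
(ii) inflation is injective on cohomology classes: if the pullbacks of `ā`
and `b̄` are cohomologous as cocycles of `G` in `A`, then `ā` and `b̄` are
cohomologous as cocycles of `G/N` in `A^N`;
(iii) a 1-cocycle of `G` in `A` whose restriction to `N` is a coboundary is
cohomologous to the pullback of a 1-cocycle of `G/N` in `A^N`. -/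
theorem inflation_restriction (G A : Type*) [Group G] [Group A]
    [MulDistribMulAction G A] (N : Subgroup G) [N.Normal] :
    -- (i) inflation is well defined
    (∀ abar : G ⧸ N → A,
      (∀ (σ : G ⧸ N) (n : G), n ∈ N → n • abar σ = abar σ) →
      (∀ s t : G, abar (((s : G ⧸ N)) * (t : G ⧸ N)) = abar s * s • abar t) →
      IsCocycle (fun s : G => abar s)) ∧
    -- (ii) inflation is injective on cohomology classes
    (∀ abar bbar : G ⧸ N → A,
      (∀ (σ : G ⧸ N) (n : G), n ∈ N → n • abar σ = abar σ) →
      (∀ (σ : G ⧸ N) (n : G), n ∈ N → n • bbar σ = bbar σ) →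
      (∀ s t : G, abar (((s : G ⧸ N)) * (t : G ⧸ N)) = abar s * s • abar t) →
      (∀ s t : G, bbar (((s : G ⧸ N)) * (t : G ⧸ N)) = bbar s * s • bbar t) →
      Cohomologous (fun s : G => abar s) (fun s : G => bbar s) →
      ∃ c : A, (∀ n : G, n ∈ N → n • c = c) ∧
        ∀ s : G, bbar s = c⁻¹ * abar s * s • c) ∧
    -- (iii) the image of inflation consists of the classes trivial on `N`
    (∀ a : G → A, IsCocycle a →
      (∃ c : A, ∀ n : G, n ∈ N → a n = c⁻¹ * (n • c)) →
      ∃ abar : G ⧸ N → A,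
        (∀ (σ : G ⧸ N) (n : G), n ∈ N → n • abar σ = abar σ) ∧
        (∀ s t : G, abar (((s : G ⧸ N)) * (t : G ⧸ N)) = abar s * s • abar t) ∧
        Cohomologous a (fun s : G => abar s)) := by

  refine ⟨?_, ?_, ?_⟩
  · -- (i)
    intro abar _ hcoc s t
    simpa [IsCocycle, QuotientGroup.mk_mul] using hcoc s t
  · -- (ii)
    intro abar bbar hfixa hfixb hca hcb ⟨c, hc⟩
    have habar1 : abar ((1 : G) : G ⧸ N) = 1 := by
      have := hca 1 1
      simp only [one_smul] at this
      rw [show ((1 : G) : G ⧸ N) * ((1 : G) : G ⧸ N) = ((1 : G) : G ⧸ N) by simp] at this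
      exact (left_eq_mul.mp this)
    have hbbar1 : bbar ((1 : G) : G ⧸ N) = 1 := by
      have := hcb 1 1
      simp only [one_smul] at this
      rw [show ((1 : G) : G ⧸ N) * ((1 : G) : G ⧸ N) = ((1 : G) : G ⧸ N) by simp] at this
      exact (left_eq_mul.mp this)
    refine ⟨c, ?_, fun s => hc s⟩
    intro n hn
    have hmk : ((n : G) : G ⧸ N) = ((1 : G) : G ⧸ N) := by
      simpa using (QuotientGroup.eq_one_iff n).mpr hn
    have := hc n
    simp only [hmk, habar1, hbbar1] at this
    have : (1 : A) = c⁻¹ * n • c := by simpa using this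
    calc n • c = c * (c⁻¹ * n • c) := by group
    _ = c := by rw [← this]; group
  · -- (iii)
    intro a ha ⟨c, hc⟩
    set b : G → A := fun s => c * a s * s • c⁻¹ with hb
    have hbcoc : ∀ s t : G, b (s * t) = b s * s • b t := by
      intro s t
      simp only [hb, ha s t, smul_mul', mul_smul, smul_inv']
      group
    have hbN : ∀ n ∈ N, b n = 1 := by
      intro n hn
      simp only [hb, hc n hn, smul_inv']
      group
    have hbmulN : ∀ s : G, ∀ n ∈ N, b (s * n) = b s := by
      intro s n hn
      rw [hbcoc s n, hbN n hn, smul_one, mul_one]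
    have hwd : ∀ x y : G, @Setoid.r G (QuotientGroup.leftRel N) x y → b x = b y := by
      intro x y hxy
      have h : x⁻¹ * y ∈ N := (QuotientGroup.leftRel_apply).mp hxy
      have : y = x * (x⁻¹ * y) := by group
      rw [this, hbmulN x _ h]
    refine ⟨fun σ => Quotient.liftOn' σ b hwd, ?_, ?_, ?_⟩
    · intro σ n hn
      induction σ using QuotientGroup.induction_on with
      | H s =>
        show n • b s = b s
        have h1 : b (n * s) = n • b s := by
          rw [hbcoc n s, hbN n hn, one_mul]
        have h2 : n * s = s * (s⁻¹ * n * s) := by group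
        have h3 : s⁻¹ * n * s ∈ N := by
          simpa using Subgroup.Normal.conj_mem ‹N.Normal› n hn s⁻¹
        rw [← h1, h2, hbmulN s _ h3]
    · intro s t
      show Quotient.liftOn' (((s : G ⧸ N)) * (t : G ⧸ N)) b hwd = b s * s • b t
      rw [← QuotientGroup.mk_mul]
      exact hbcoc s t
    · refine ⟨c⁻¹, fun s => ?_⟩
      show b s = c⁻¹⁻¹ * a s * s • c⁻¹
      rw [inv_inv, hb]
end

section
/- Let f and g be cusp forms of weight n for SL₂(ℤ). Then the function z ↦ f(z) * conj(g(z)) * (Im z)^(n-2) is integrable on the standard fundamental domain 𝒟; in particular the Petersson inner product ⟨f,g⟩ = ∫_𝒟 f(z) conj(g(z)) (Im z)^(n-2) dx dy is finite. -/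
open UpperHalfPlane Filter Complex MeasureTheory
open scoped Manifold MatrixGroups Topology

/-- The weight-`n` modular transformation law for `SL(2, ℤ)`. -/
def IsWeaklyModular (n : ℤ) (f : ℍ → ℂ) : Prop :=
  ∀ (γ : SL(2, ℤ)) (z : ℍ),
    f (γ • z) = (((γ : Matrix (Fin 2) (Fin 2) ℤ) 1 0 : ℂ) * z
      + ((γ : Matrix (Fin 2) (Fin 2) ℤ) 1 1 : ℂ)) ^ n * f z

/-- A cusp form of weight `n` for `SL(2, ℤ)`. -/
def IsCuspForm (n : ℤ) (f : ℍ → ℂ) : Prop :=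
  MDifferentiable 𝓘(ℂ) 𝓘(ℂ) f ∧ IsWeaklyModular n f ∧
    UpperHalfPlane.IsZeroAtImInfty f

/-- The standard fundamental domain `{z : |Re z| < 1/2, |z| > 1}` for the
action of `SL(2, ℤ)` on the upper half-plane, viewed as a subset of `ℂ`
(with its Lebesgue measure `dx dy`). -/
def FundamentalDomain : Set ℂ :=
  {z : ℂ | 0 < z.im ∧ |z.re| < 1 / 2 ∧ 1 < ‖z‖}

/-- The Petersson integrand `f(z) conj(g(z)) (Im z)^(n-2)` of weight `n`,
extended (by `0`) to all of `ℂ`. -/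
noncomputable def peterssonIntegrand (n : ℤ) (f g : ℍ → ℂ) : ℂ → ℂ :=
  fun z =>
    if h : 0 < z.im then
      f ⟨z, h⟩ * (starRingEnd ℂ) (g ⟨z, h⟩) * ((z.im : ℂ)) ^ (n - 2)
    else 0

/-! A level-one cusp form is `1`-periodic and vanishes at `i∞`, so its `q`-expansion makes it
`O(e^{-2π Im z})`; hence the Petersson integrand, continuous on `ℍ`, is `O(e^{-π Im z})`.
Since `𝒟` lies in the half-strip `[-1/2, 1/2] × [1/2, ∞)`, integrability follows by splitting
the strip into a compact rectangle, where continuity suffices, and a tail dominated by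
`C e^{-π y}`. -/

open Asymptotics Set
open scoped ComplexConjugate

lemma IsWeaklyModular.vadd_one {n : ℤ} {f : ℍ → ℂ} (hf : IsWeaklyModular n f) (τ : ℍ) :
    f ((1 : ℝ) +ᵥ τ) = f τ := by
  have := hf ModularGroup.T τ
  rw [modular_T_smul] at this
  simpa [ModularGroup.coe_T] using this

lemma IsWeaklyModular.periodic_comp_ofComplex {n : ℤ} {f : ℍ → ℂ} (hf : IsWeaklyModular n f) :
    Function.Periodic (f ∘ ofComplex) 1 := by
  intro w
  by_cases! hw : 0 < w.im
  · have hw' : 0 < (w + 1).im := by simp [hw]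
    simp only [Function.comp_apply, ofComplex_apply_of_im_pos hw, ofComplex_apply_of_im_pos hw']
    convert hf.vadd_one ⟨w, hw⟩ using 2
    ext
    simp [add_comm]
  · have hw' : (w + 1).im ≤ 0 := by simpa using hw
    simp [ofComplex_apply_of_im_nonpos hw, ofComplex_apply_of_im_nonpos hw']

lemma IsCuspForm.isBigO_exp {n : ℤ} {f : ℍ → ℂ} (hf : IsCuspForm n f) :
    f =O[atImInfty] fun τ ↦ Real.exp (-(2 * Real.pi) * τ.im) := by
  simpa using hf.2.2.exp_decay_atImInfty one_pos hf.2.1.periodic_comp_ofComplex hf.1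
    hf.2.2.isBoundedAtImInfty

lemma isBigO_exp_mul_zpow_im {f : ℍ → ℂ} {a b : ℝ} (hab : a < b) (k : ℤ)
    (hf : f =O[atImInfty] fun τ ↦ Real.exp (-b * τ.im)) :
    (fun τ : ℍ ↦ f τ * (τ.im : ℂ) ^ k) =O[atImInfty] fun τ ↦ Real.exp (-a * τ.im) := by
  have hpow : (fun t : ℝ ↦ Real.exp (-b * t) * t ^ k) =O[atTop] fun t ↦ Real.exp (-a * t) := by
    simpa using (isLittleO_exp_mul_rpow_of_lt (k : ℝ) (neg_lt_neg hab)).isBigO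
  refine (hf.mul (isBigO_refl (fun τ : ℍ ↦ (τ.im : ℂ) ^ k) atImInfty).norm_right).trans ?_
  have him : Tendsto UpperHalfPlane.im atImInfty atTop := tendsto_comap
  simpa [norm_zpow, abs_of_pos (UpperHalfPlane.im_pos _), Function.comp_def] using
    hpow.comp_tendsto him

lemma isBigO_mul_conj_mul_zpow_im {f g : ℍ → ℂ} {a b : ℝ} (hab : a < b) (k : ℤ)
    (hf : f =O[atImInfty] fun τ ↦ Real.exp (-b * τ.im)) (hg : IsBoundedAtImInfty g) :
    (fun τ : ℍ ↦ f τ * conj (g τ) * (τ.im : ℂ) ^ k) =O[atImInfty]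
      fun τ ↦ Real.exp (-a * τ.im) := by
  have hg' : (fun τ ↦ conj (g τ)) =O[atImInfty] fun _ ↦ (1 : ℝ) :=
    (hg.norm_left.congr_left fun τ ↦ (Complex.norm_conj _).symm).of_norm_left
  simpa [mul_right_comm] using (isBigO_exp_mul_zpow_im hab k hf).mul hg'

lemma integrableOn_reProdIm_mul {u v : ℝ → ℝ} {s t : Set ℝ} (hu : IntegrableOn u s)
    (hv : IntegrableOn v t) : IntegrableOn (fun z : ℂ ↦ u z.re * v z.im) (s ×ℂ t) := by
  have hprod : IntegrableOn (fun p : ℝ × ℝ ↦ u p.1 * v p.2) (s ×ˢ t) := by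
    rw [IntegrableOn, Measure.volume_eq_prod, ← Measure.prod_restrict]
    exact hu.mul_prod hv
  exact (Complex.volume_preserving_equiv_real_prod.integrableOn_comp_preimage
    Complex.measurableEquivRealProd.measurableEmbedding).mpr hprod

lemma integrableOn_reProdIm_Ici_of_isBigO {E : Type*} [NormedAddCommGroup E] {F : ℂ → E}
    {s : Set ℝ} {y₀ c : ℝ} (hs : IsCompact s) (hc : 0 < c)
    (hcont : ContinuousOn F (s ×ℂ Ici y₀))
    (hdecay : F =O[comap Complex.im atTop] fun z ↦ Real.exp (-c * z.im)) :
    IntegrableOn F (s ×ℂ Ici y₀) := by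
  obtain ⟨C, hC⟩ := hdecay.bound
  obtain ⟨A, -, hA⟩ := (atTop_basis.comap Complex.im).eventually_iff.mp hC
  set y₁ := max y₀ A
  have hsplit : s ×ℂ Ici y₀ ⊆ s ×ℂ Icc y₀ y₁ ∪ s ×ℂ Ici y₁ := by
    rintro z ⟨hre, him⟩
    rcases le_total z.im y₁ with h | h
    · exact .inl ⟨hre, him, h⟩
    · exact .inr ⟨hre, h⟩
  have hsub : s ×ℂ Ici y₁ ⊆ s ×ℂ Ici y₀ := fun z ⟨hre, him⟩ ↦
    ⟨hre, show y₀ ≤ z.im from (le_max_left _ _).trans him⟩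
  refine IntegrableOn.mono_set (IntegrableOn.union ?_ ?_) hsplit
  · exact (hcont.mono fun z hz ↦ ⟨hz.1, hz.2.1⟩).integrableOn_compact
      (hs.reProdIm isCompact_Icc)
  · have hmeas : MeasurableSet (s ×ℂ Ici y₁) :=
      (hs.isClosed.reProdIm isClosed_Ici).measurableSet
    have hdom : IntegrableOn (fun z : ℂ ↦ C * Real.exp (-c * z.im)) (s ×ℂ Ici y₁) := by
      refine integrableOn_reProdIm_mul (u := fun _ ↦ C) (v := fun y ↦ Real.exp (-c * y)) ?_ ?_
      · exact integrableOn_const hs.measure_lt_top.ne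
      · exact (integrableOn_Ici_iff_integrableOn_Ioi).mpr (exp_neg_integrableOn_Ioi y₁ hc)
    refine hdom.mono' ((hcont.mono hsub).aestronglyMeasurable hmeas) ?_
    filter_upwards [ae_restrict_mem hmeas] with z ⟨_, hz⟩
    simpa using hA (show A ≤ z.im from (le_max_right _ _).trans hz)

lemma continuousOn_of_eqOn_comp_ofComplex {E : Type*} [TopologicalSpace E] {F : ℂ → E}
    {G : ℍ → E} (hG : Continuous G) (hFG : EqOn F (G ∘ ofComplex) {z | 0 < z.im}) :
    ContinuousOn F {z | 0 < z.im} :=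
  (hG.comp_continuousOn fun _ hz ↦
    (mdifferentiableAt_ofComplex hz).continuousAt.continuousWithinAt).congr hFG

lemma isBigO_comap_im_of_eqOn_comp_ofComplex {E : Type*} [NormedAddCommGroup E] {F : ℂ → E}
    {G : ℍ → E} {c : ℝ} (hFG : EqOn F (G ∘ ofComplex) {z | 0 < z.im})
    (hG : G =O[atImInfty] fun τ ↦ Real.exp (-c * τ.im)) :
    F =O[comap Complex.im atTop] fun z ↦ Real.exp (-c * z.im) := by
  have hpos : {z : ℂ | 0 < z.im} ∈ comap Complex.im atTop :=
    preimage_mem_comap (Ioi_mem_atTop 0)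
  refine ((hG.comp_tendsto tendsto_comap_im_ofComplex).congr' ?_ ?_)
  · exact eventually_of_mem hpos fun z hz ↦ (hFG hz).symm
  · exact eventually_of_mem hpos fun z hz ↦ by simp [ofComplex_apply_of_im_pos hz]

lemma peterssonIntegrand_eqOn (n : ℤ) (f g : ℍ → ℂ) :
    EqOn (peterssonIntegrand n f g)
      ((fun τ : ℍ ↦ f τ * conj (g τ) * (τ.im : ℂ) ^ (n - 2)) ∘ ofComplex) {z | 0 < z.im} :=
  fun z (hz : 0 < z.im) ↦ by
    rw [Function.comp_apply, ofComplex_apply_of_im_pos hz]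
    exact dif_pos hz

lemma peterssonIntegrand_continuousOn (n : ℤ) {f g : ℍ → ℂ} (hf : Continuous f)
    (hg : Continuous g) : ContinuousOn (peterssonIntegrand n f g) {z | 0 < z.im} := by
  refine continuousOn_of_eqOn_comp_ofComplex ?_ (peterssonIntegrand_eqOn n f g)
  fun_prop (disch := simp [UpperHalfPlane.im_ne_zero _])

lemma fundamentalDomain_subset_reProdIm :
    FundamentalDomain ⊆ Icc (-(1 / 2)) (1 / 2) ×ℂ Ici (1 / 2) := by
  rintro z ⟨him, hre, hnorm⟩
  have hsq : 1 < z.re ^ 2 + z.im ^ 2 := by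
    have := Complex.sq_norm z
    rw [Complex.normSq_apply] at this
    nlinarith
  have hre2 : z.re ^ 2 < 1 / 4 := by nlinarith [abs_nonneg z.re, sq_abs z.re]
  obtain ⟨hre₁, hre₂⟩ := abs_lt.mp hre
  exact ⟨⟨hre₁.le, hre₂.le⟩, show 1 / 2 ≤ z.im by nlinarith⟩

/-- For cusp forms `f`, `g` of weight `n`, the Petersson integrand
`f(z) conj(g(z)) (Im z)^(n-2)` is integrable on the standard fundamental
domain; in particular the Petersson inner product `⟨f, g⟩` is finite. -/
theorem petersson_integrable (n : ℤ) (f g : ℍ → ℂ)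
    (hf : IsCuspForm n f) (hg : IsCuspForm n g) :
    IntegrableOn (peterssonIntegrand n f g) FundamentalDomain volume := by
  have hcont := peterssonIntegrand_continuousOn n hf.1.continuous hg.1.continuous
  have hdecay : peterssonIntegrand n f g =O[comap Complex.im atTop]
      fun z ↦ Real.exp (-Real.pi * z.im) :=
    isBigO_comap_im_of_eqOn_comp_ofComplex (peterssonIntegrand_eqOn n f g) <|
      isBigO_mul_conj_mul_zpow_im (by linarith [Real.pi_pos]) (n - 2) hf.isBigO_exp
        hg.2.2.isBoundedAtImInfty
  have hstrip : Icc (-(1 / 2)) (1 / 2) ×ℂ Ici (1 / 2) ⊆ {z : ℂ | 0 < z.im} :=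
    fun z hz ↦ show 0 < z.im from one_half_pos.trans_le hz.2
  exact (integrableOn_reProdIm_Ici_of_isBigO isCompact_Icc Real.pi_pos (hcont.mono hstrip)
    hdecay).mono_set fundamentalDomain_subset_reProdIm
end

section
/- For every integer k ≥ 1, the Hecke operator T(k) preserves cusp forms: if f is a cusp form of weight n for SL₂(ℤ), then the function (T(k)f)(z) = k^(n-1) Σ_{a,d ≥ 1, ad = k} Σ_{0 ≤ b < d} d^(-n) f((az+b)/d) is again a cusp form of weight n for SL₂(ℤ) (it is holomorphic on ℍ, satisfies (T(k)f)(γ•z) = (cz+d)^n (T(k)f)(z) for all γ ∈ SL₂(ℤ), and tends to 0 as Im z → ∞). -/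
open UpperHalfPlane Filter Complex
open scoped Manifold MatrixGroups Topology

noncomputable section

/-- The point `(a z + b) / d` of the upper half-plane, for `a, d ≥ 1` and
`b ≥ 0`. -/
def heckePoint (a d : ℕ) (ha : 0 < a) (hd : 0 < d) (b : ℕ) (z : ℍ) : ℍ :=
  ⟨((a : ℂ) * z + b) / d, by
    have hz : 0 < (z : ℂ).im := z.2
    have hd' : (0 : ℝ) < (d : ℝ) := by exact_mod_cast hd
    have him : (((a : ℂ) * z + b) / d).im = a * (z : ℂ).im * d / ((d : ℝ) ^ 2) := by
      rw [Complex.div_im]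
      simp [Complex.add_im, Complex.mul_im]
      ring
    rw [him]
    positivity⟩

/-- The `k`-th Hecke operator of weight `n`:
`(T(k) f)(z) = k^(n-1) Σ_{a d = k, a, d ≥ 1} Σ_{0 ≤ b < d} d^(-n) f((a z + b)/d)`. -/
def hecke (n : ℤ) (k : ℕ) (f : ℍ → ℂ) : ℍ → ℂ := fun z =>
  (k : ℂ) ^ (n - 1) *
    ∑ p ∈ (Nat.divisorsAntidiagonal k).attach,
      ∑ b ∈ Finset.range p.1.2,
        ((p.1.2 : ℂ)) ^ (-n) *
          f (heckePoint p.1.1 p.1.2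
            (Nat.pos_of_mem_divisors (Nat.fst_mem_divisors_of_mem_antidiagonal p.2))
            (Nat.pos_of_mem_divisors (Nat.snd_mem_divisors_of_mem_antidiagonal p.2))
            b z)

open Matrix ModularForm
open scoped ModularForm

/-!
The Hecke sum is `T(k) f = ∑ f ∣[n] M`, where `M = !![a, b; 0, d]` runs over the Hermite normal
forms, which represent the left `SL(2, ℤ)`-cosets of integer matrices of determinant `k`.
Right multiplication by `γ ∈ SL(2, ℤ)` permutes these cosets and `f ∣[n] (δ * M) = f ∣[n] M` for
`δ ∈ SL(2, ℤ)`, so the sum is `γ`-invariant. Holomorphy and vanishing at `i∞` pass to each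
`f ∣[n] M` because `M` is upper triangular.
-/

theorem exists_SL2Z_mul_eq_upperTriangular (A : Matrix (Fin 2) (Fin 2) ℤ) (hA : 0 < A.det) :
    ∃ (δ : SL(2, ℤ)) (a b d : ℤ), 0 < a ∧ 0 ≤ b ∧ b < d ∧
      (δ : Matrix (Fin 2) (Fin 2) ℤ) * A = !![a, b; 0, d] := by
  obtain ⟨p, q, r, s, rfl⟩ : ∃ p q r s, A = !![p, q; r, s] := ⟨_, _, _, _, A.eta_fin_two⟩
  -- A Bezout matrix clears the lower left entry, then a power of `T` reduces `b` modulo `d`.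
  have hpr : 0 < Int.gcd p r := Int.gcd_pos_iff.mpr <| by
    by_contra! h
    simp [h.1, h.2, det_fin_two_of] at hA
  obtain ⟨g, p', r', hg, hcop, rfl, rfl⟩ := Int.exists_gcd_one' hpr
  obtain ⟨u, v, huv⟩ := Int.isCoprime_iff_gcd_eq_one.mpr hcop
  set c := u * q + v * s
  set d := p' * s - r' * q
  have hd : 0 < d := by
    rw [det_fin_two_of, show p' * g * s - q * (r' * g) = g * d by ring] at hA
    exact pos_of_mul_pos_right hA (by positivity)
  let δ : SL(2, ℤ) := ⟨!![u, v; -r', p'], by simp [det_fin_two_of]; linarith⟩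
  have hδ : (δ : Matrix (Fin 2) (Fin 2) ℤ) * !![p' * g, q; r' * g, s] =
      !![(g : ℤ), c; 0, d] := by
    rw [show (δ : Matrix (Fin 2) (Fin 2) ℤ) = !![u, v; -r', p'] from rfl, mul_fin_two]
    simp only [EmbeddingLike.apply_eq_iff_eq, vecCons_inj, and_true]
    refine ⟨⟨by linear_combination (g : ℤ) * huv, rfl⟩, by ring, by ring⟩
  refine ⟨ModularGroup.T ^ (-(c / d)) * δ, g, c % d, d, by exact_mod_cast hg,
    Int.emod_nonneg _ hd.ne', Int.emod_lt_of_pos _ hd, ?_⟩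
  rw [Matrix.SpecialLinearGroup.coe_mul, mul_assoc, hδ, ModularGroup.coe_T_zpow, mul_fin_two,
    Int.emod_def]
  simp only [EmbeddingLike.apply_eq_iff_eq, vecCons_inj, and_true]
  refine ⟨⟨by ring, by ring⟩, by ring, by ring⟩

theorem upperTriangular_eq_of_SL2Z_mul_eq {a b d a' b' d' : ℤ} (ha : 0 < a) (hb : 0 ≤ b)
    (hbd : b < d) (ha' : 0 < a') (hb' : 0 ≤ b') (hbd' : b' < d') (δ : SL(2, ℤ))
    (h : (δ : Matrix (Fin 2) (Fin 2) ℤ) * !![a, b; 0, d] = !![a', b'; 0, d']) :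
    a = a' ∧ b = b' ∧ d = d' := by
  obtain ⟨e, f, g, k, hδ⟩ : ∃ e f g k, (δ : Matrix (Fin 2) (Fin 2) ℤ) = !![e, f; g, k] :=
    ⟨_, _, _, _, eta_fin_two _⟩
  have hdet : e * k - f * g = 1 := by rw [← det_fin_two_of, ← hδ, δ.2]
  rw [hδ, mul_fin_two] at h
  simp only [mul_zero, add_zero, EmbeddingLike.apply_eq_iff_eq, vecCons_inj, and_true] at h
  obtain ⟨⟨rfl, rfl⟩, hg, rfl⟩ := h
  obtain rfl : g = 0 := by simpa [ha.ne'] using hg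
  obtain ⟨rfl, rfl⟩ : e = 1 ∧ k = 1 := by
    rcases Int.mul_eq_one_iff_eq_one_or_neg_one.mp (by simpa using hdet) with h | h
    · exact h
    · nlinarith [h.1]
  obtain rfl : f = 0 := by
    have hd : 0 < d := hb.trans_lt hbd
    have : f < 1 := by nlinarith
    have : -1 < f := by nlinarith
    omega
  simp

theorem SlashAction.sum_slash_slash_eq_of_permutes_cosets {ι G α β : Type*} [Group G]
    [AddCommGroup α] [SlashAction β G α] {Γ : Subgroup G} {k : β} {f : α}
    (hf : ∀ h ∈ Γ, f ∣[k] h = f)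
    {s : Finset ι} {g : ι → G} (hinj : ∀ i ∈ s, ∀ j ∈ s, g j * (g i)⁻¹ ∈ Γ → i = j)
    {γ : G} (hγ : ∀ i ∈ s, ∃ j ∈ s, g j * (g i * γ)⁻¹ ∈ Γ) :
    (∑ i ∈ s, f ∣[k] g i) ∣[k] γ = ∑ i ∈ s, f ∣[k] g i := by
  -- `σ i` is the representative in `s` of the coset `Γ * (g i * γ)`.
  choose! σ hσs hσ using hγ
  have hσinj : Set.InjOn σ s := fun i hi j hj hij => by
    have := Γ.mul_mem (Γ.inv_mem (hσ j hj)) (hσ i hi)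
    rw [hij] at this
    exact hinj i hi j hj (by simpa [mul_assoc] using this)
  rw [SlashAction.sum_slash]
  refine Finset.sum_nbij σ hσs hσinj ?_ fun i hi => ?_
  · exact Finset.surjOn_of_injOn_of_card_le σ hσs hσinj le_rfl
  · obtain ⟨h, hΓ, hh⟩ : ∃ h ∈ Γ, g i * γ = h⁻¹ * g (σ i) := ⟨_, hσ i hi, by group⟩
    rw [← SlashAction.slash_mul, hh, SlashAction.slash_mul, hf _ (Γ.inv_mem hΓ)]

lemma Matrix.SpecialLinearGroup.mapGL_coe_matrix_intCast {n : Type*} [Fintype n]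
    [DecidableEq n] (γ : SpecialLinearGroup n ℤ) :
    (mapGL ℝ γ : Matrix n n ℝ) = (γ : Matrix n n ℤ).map (↑) :=
  rfl

lemma Matrix.SpecialLinearGroup.mul_inv_mem_range_mapGL_iff {n : Type*} [Fintype n]
    [DecidableEq n] {A B : GL n ℝ} {M N : Matrix n n ℤ}
    (hA : (A : Matrix n n ℝ) = M.map (↑)) (hB : (B : Matrix n n ℝ) = N.map (↑)) :
    B * A⁻¹ ∈ (mapGL ℝ : SpecialLinearGroup n ℤ →* GL n ℝ).range ↔
      ∃ δ : SpecialLinearGroup n ℤ, (δ : Matrix n n ℤ) * M = N := by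
  simp only [MonoidHom.mem_range, eq_mul_inv_iff_mul_eq, ← Units.val_inj, Units.val_mul,
    mapGL_coe_matrix_intCast, hA, hB, ← map_mul_intCast,
    (map_injective (Int.cast_injective (α := ℝ))).eq_iff]

namespace Hecke

open SpecialLinearGroup

abbrev Index (k : ℕ) := Σ _ : Nat.divisorsAntidiagonal k, ℕ

def indexSet (k : ℕ) : Finset (Index k) :=
  (Nat.divisorsAntidiagonal k).attach.sigma fun p => Finset.range p.1.2

variable {k : ℕ}

lemma mem_indexSet {x : Index k} : x ∈ indexSet k ↔ x.2 < x.1.1.2 := by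
  simp [indexSet]

lemma Index.pos (x : Index k) : 0 < k :=
  Nat.pos_of_ne_zero (Nat.mem_divisorsAntidiagonal.mp x.1.2).2

lemma Index.fst_pos (x : Index k) : 0 < x.1.1.1 :=
  Nat.pos_of_mem_divisors (Nat.fst_mem_divisors_of_mem_antidiagonal x.1.2)

lemma Index.snd_pos (x : Index k) : 0 < x.1.1.2 :=
  Nat.pos_of_mem_divisors (Nat.snd_mem_divisors_of_mem_antidiagonal x.1.2)

def Index.toMatrix (x : Index k) : Matrix (Fin 2) (Fin 2) ℤ := !![x.1.1.1, x.2; 0, x.1.1.2]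

lemma Index.det_toMatrix (x : Index k) : x.toMatrix.det = k := by
  rw [Index.toMatrix, det_fin_two_of, mul_zero, sub_zero]
  exact_mod_cast (Nat.mem_divisorsAntidiagonal.mp x.1.2).1

def Index.toGL (x : Index k) : GL (Fin 2) ℝ :=
  .mkOfDetNeZero (x.toMatrix.map (↑)) <| by
    rw [← Int.cast_det, x.det_toMatrix]
    exact_mod_cast (Nat.mem_divisorsAntidiagonal.mp x.1.2).2

lemma Index.coe_toGL (x : Index k) : (x.toGL : Matrix (Fin 2) (Fin 2) ℝ) = x.toMatrix.map (↑) := rfl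

lemma Index.det_toGL (x : Index k) : x.toGL.det.val = k := by
  rw [GeneralLinearGroup.val_det_apply, coe_toGL, ← Int.cast_det, x.det_toMatrix]; rfl

lemma Index.toGL_smul (x : Index k) (z : ℍ) :
    x.toGL • z = heckePoint x.1.1.1 x.1.1.2 x.fst_pos x.snd_pos x.2 z := by
  ext
  rw [coe_smul_of_det_pos (by rw [det_toGL]; exact_mod_cast x.pos)]
  simp [num, denom, coe_toGL, toMatrix, heckePoint]

lemma Index.toGL_one_zero (x : Index k) : x.toGL 1 0 = 0 := by
  simp [coe_toGL, toMatrix]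

lemma Index.denom_toGL (x : Index k) (z : ℍ) : denom x.toGL z = x.1.1.2 := by
  simp [denom, coe_toGL, toMatrix]

lemma Index.slash_toGL_apply (n : ℤ) (f : ℍ → ℂ) (x : Index k) (z : ℍ) :
    (f ∣[n] x.toGL) z = (k : ℂ) ^ (n - 1) * ((x.1.1.2 : ℂ) ^ (-n) *
      f (heckePoint x.1.1.1 x.1.1.2 x.fst_pos x.snd_pos x.2 z)) := by
  have hdet : 0 < x.toGL.det.val := by rw [det_toGL]; exact_mod_cast x.pos
  rw [slash_apply, σ, if_pos hdet, x.toGL_smul, x.denom_toGL, x.det_toGL, Nat.abs_cast,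
    ContinuousAlgEquiv.refl_apply]
  push_cast
  ring

lemma hecke_eq_sum_slash (n : ℤ) (k : ℕ) (f : ℍ → ℂ) :
    hecke n k f = ∑ x ∈ indexSet k, f ∣[n] x.toGL := by
  ext z
  rw [Finset.sum_apply, indexSet, Finset.sum_sigma, hecke, Finset.mul_sum]
  refine Finset.sum_congr rfl fun p _ => ?_
  rw [Finset.mul_sum]
  exact Finset.sum_congr rfl fun b _ => (Index.slash_toGL_apply n f ⟨p, b⟩ z).symm

lemma Index.toGL_mul_mapGL (x : Index k) (γ : SL(2, ℤ)) :
    ((x.toGL * mapGL ℝ γ : GL (Fin 2) ℝ) : Matrix (Fin 2) (Fin 2) ℝ) =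
      (x.toMatrix * (γ : Matrix (Fin 2) (Fin 2) ℤ)).map (↑) := by
  rw [Units.val_mul, coe_toGL, mapGL_coe_matrix_intCast, map_mul_intCast]

lemma eq_of_mul_inv_mem_range_mapGL {x y : Index k} (hx : x ∈ indexSet k) (hy : y ∈ indexSet k)
    (h : y.toGL * x.toGL⁻¹ ∈ 𝒮ℒ) : x = y := by
  obtain ⟨δ, hδ⟩ := (mul_inv_mem_range_mapGL_iff x.coe_toGL y.coe_toGL).mp h
  obtain ⟨ha, hb, hd⟩ := upperTriangular_eq_of_SL2Z_mul_eq (by exact_mod_cast x.fst_pos)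
    (by positivity) (by exact_mod_cast mem_indexSet.mp hx) (by exact_mod_cast y.fst_pos)
    (by positivity) (by exact_mod_cast mem_indexSet.mp hy) δ hδ
  obtain ⟨⟨⟨a, d⟩, _⟩, b⟩ := x
  obtain ⟨⟨⟨a', d'⟩, _⟩, b'⟩ := y
  simp_all

lemma exists_mul_inv_mem_range_mapGL (x : Index k) (γ : SL(2, ℤ)) :
    ∃ y ∈ indexSet k, y.toGL * (x.toGL * mapGL ℝ γ)⁻¹ ∈ 𝒮ℒ := by
  have hdet : (x.toMatrix * (γ : Matrix (Fin 2) (Fin 2) ℤ)).det = k := by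
    rw [det_mul, x.det_toMatrix, γ.2, mul_one]
  obtain ⟨δ, a, b, d, ha, hb, hbd, hδ⟩ :=
    exists_SL2Z_mul_eq_upperTriangular _ (by rw [hdet]; exact_mod_cast x.pos)
  lift a to ℕ using ha.le
  lift d to ℕ using hb.trans hbd.le
  lift b to ℕ using hb
  have had : a * d = k := by
    have := congrArg det hδ
    rw [det_mul, hdet, δ.2, one_mul, det_fin_two_of] at this
    exact_mod_cast (by linarith : (a : ℤ) * d = k)
  refine ⟨⟨⟨(a, d), Nat.mem_divisorsAntidiagonal.mpr ⟨had, x.pos.ne'⟩⟩, b⟩,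
    mem_indexSet.mpr (by exact_mod_cast hbd), ?_⟩
  exact (mul_inv_mem_range_mapGL_iff (x.toGL_mul_mapGL γ) (Index.coe_toGL _)).mpr ⟨δ, hδ⟩

end Hecke

lemma isWeaklyModular_iff_slash_eq {n : ℤ} {f : ℍ → ℂ} :
    IsWeaklyModular n f ↔ ∀ γ : SL(2, ℤ), f ∣[n] γ = f := by
  simp only [IsWeaklyModular, funext_iff, slash_action_eq'_iff]

theorem hecke_preserves_cuspForms_general (n : ℤ) (k : ℕ)
    (f : ℍ → ℂ) (hf : IsCuspForm n f) : IsCuspForm n (hecke n k f) := by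
  obtain ⟨hf_holo, hf_mod, hf_cusp⟩ := hf
  have hf_inv : ∀ h ∈ 𝒮ℒ, f ∣[n] h = f := by
    rintro _ ⟨δ, rfl⟩
    exact isWeaklyModular_iff_slash_eq.mp hf_mod δ
  rw [Hecke.hecke_eq_sum_slash]
  refine ⟨MDifferentiable.sum fun x _ => hf_holo.slash n x.toGL, ?_, ?_⟩
  · refine isWeaklyModular_iff_slash_eq.mpr fun γ => ?_
    exact SlashAction.sum_slash_slash_eq_of_permutes_cosets hf_inv
      (fun x hx y hy => Hecke.eq_of_mul_inv_mem_range_mapGL hx hy)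
      (fun x _ => Hecke.exists_mul_inv_mem_range_mapGL x γ)
  · exact (zeroAtImInftySubmodule ℂ).sum_mem fun x _ => hf_cusp.slash n x.toGL_one_zero

/-- The Hecke operators preserve cusp forms: if `f` is a cusp form of weight
`n` for `SL(2, ℤ)` and `k ≥ 1`, then `T(k) f` is again a cusp form of weight
`n`. -/
theorem hecke_preserves_cuspForms (n : ℤ) (k : ℕ) (hk : 1 ≤ k)
    (f : ℍ → ℂ) (hf : IsCuspForm n f) : IsCuspForm n (hecke n k f) :=
  hecke_preserves_cuspForms_general n k f hf

end
end
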